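/- arXiv:1709.05846 — 3 statements merged into one kernel-verified Lean document; each statement's English description precedes it below -/
import Mathlib

section
/- Let p ≥ 2, k ∈ ℕ, c ∈ ℂ, and x ∈ EuclideanSpace ℝ (Fin p). Then ∫_{S^{p-1}} (⟨x,t⟩ + c)^k dσ(t) = Σ_{j=0}^{⌊k/2⌋} C(k, 2j) · 2π^{(p-1)/2} (Γ(j + 1/2)/Γ(p/2 + j)) · ‖x‖^{2j} · c^{k-2j}, where C(k,·) is the binomial coefficient. -/
/-!
Gaussian trick: integrate `⟪x, y⟫ ^ n * exp (-‖y‖ ^ 2)` over the whole space in two ways. In polar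
coordinates it splits as the spherical moment `∫ ⟪x, t⟫ ^ n dσ(t)` times the radial integral
`Γ((n + p) / 2) / 2`. Rotating `x / ‖x‖` to a coordinate axis instead, it factors into the
one-dimensional moment `∫ s ^ n * exp (-s ^ 2) ds`, which vanishes for odd `n` and is
`Γ(j + 1/2)` for `n = 2j`, times `√π ^ (p - 1)` from the remaining coordinates. Expanding
`(⟪x, t⟫ + c) ^ k` binomially, only the even moments survive.
-/

open MeasureTheory Metric
open Real Set Module
open scoped RealInnerProductSpace

theorem integral_Ioi_pow_mul_exp_neg_sq (m : ℕ) :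
    ∫ r in Ioi (0 : ℝ), r ^ m * exp (-r ^ 2) = Gamma ((m + 1) / 2) / 2 := by
  have h := integral_rpow_mul_exp_neg_rpow two_pos (neg_one_lt_zero.trans_le m.cast_nonneg)
  norm_num [rpow_natCast] at h
  rw [h]
  ring

theorem integral_pow_mul_exp_neg_sq_of_odd {n : ℕ} (hn : Odd n) :
    ∫ x : ℝ, x ^ n * exp (-x ^ 2) = 0 := by
  have h := integral_neg_eq_self (fun x : ℝ ↦ x ^ n * exp (-x ^ 2)) volume
  simp only [hn.neg_pow, neg_sq, neg_mul, integral_neg] at h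
  linarith

theorem integral_pow_two_mul_mul_exp_neg_sq (j : ℕ) :
    ∫ x : ℝ, x ^ (2 * j) * exp (-x ^ 2) = Gamma (j + 1 / 2) := by
  have h := integral_comp_abs (f := fun r ↦ r ^ (2 * j) * exp (-r ^ 2))
  simp only [(even_two_mul j).pow_abs, sq_abs] at h
  rw [h, integral_Ioi_pow_mul_exp_neg_sq]
  push_cast
  ring_nf

theorem integral_fun_apply_mul_exp_neg_sum_sq {ι : Type*} [Fintype ι] [DecidableEq ι] (i₀ : ι)
    (g : ℝ → ℝ) :
    ∫ w : ι → ℝ, g (w i₀) * exp (-∑ i, w i ^ 2)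
      = (∫ s, g s * exp (-s ^ 2)) * √π ^ (Fintype.card ι - 1) := by
  set h : ι → ℝ → ℝ := Function.update (fun _ s ↦ exp (-s ^ 2)) i₀ fun s ↦ g s * exp (-s ^ 2)
  have factor (w : ι → ℝ) : g (w i₀) * exp (-∑ i, w i ^ 2) = ∏ i, h i (w i) := by
    simp only [h, Function.apply_update (fun i (φ : ℝ → ℝ) ↦ φ (w i)),
      Finset.prod_update_of_mem (Finset.mem_univ i₀), ← Finset.sum_neg_distrib, exp_sum,
      Finset.sdiff_singleton_eq_erase, ← Finset.mul_prod_erase _ _ (Finset.mem_univ i₀), mul_assoc]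
  have gaussian : ∫ s, exp (-s ^ 2) = √π := by
    simpa using integral_gaussian 1
  simp only [factor, integral_fintype_prod_volume_eq_prod h, h,
    Function.apply_update (fun _ (φ : ℝ → ℝ) ↦ ∫ s, φ s),
    Finset.prod_update_of_mem (Finset.mem_univ i₀), gaussian, Finset.prod_const,
    Finset.sdiff_singleton_eq_erase, Finset.card_erase_of_mem (Finset.mem_univ _), Finset.card_univ]

theorem EuclideanSpace.integral_fun_apply_mul_exp_neg_norm_sq {ι : Type*} [Fintype ι] (i₀ : ι)
    (g : ℝ → ℝ) :
    ∫ z : EuclideanSpace ℝ ι, g (z i₀) * exp (-‖z‖ ^ 2)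
      = (∫ s, g s * exp (-s ^ 2)) * √π ^ (Fintype.card ι - 1) := by
  classical
  rw [← integral_fun_apply_mul_exp_neg_sum_sq i₀ g,
    ← (EuclideanSpace.volume_preserving_symm_measurableEquiv_toLp ι).integral_comp']
  simp [EuclideanSpace.norm_sq_eq]

theorem integral_fun_unit_mul_fun_norm_addHaar {E : Type*} [NormedAddCommGroup E]
    [NormedSpace ℝ E] [FiniteDimensional ℝ E] [MeasurableSpace E] [BorelSpace E] [Nontrivial E]
    (μ : Measure E) [μ.IsAddHaarMeasure] (f : E → ℝ) (w : ℝ → ℝ) :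
    ∫ y, f (‖y‖⁻¹ • y) * w ‖y‖ ∂μ
      = (∫ t : sphere (0 : E) 1, f t ∂μ.toSphere) *
          ∫ r in Ioi (0 : ℝ), r ^ (finrank ℝ E - 1) * w r :=
  calc
    ∫ y, f (‖y‖⁻¹ • y) * w ‖y‖ ∂μ
        = ∫ y : ({(0)}ᶜ : Set E), f (‖y.1‖⁻¹ • y.1) * w ‖y.1‖ ∂(μ.comap (↑)) := by
      rw [integral_subtype_comap (measurableSet_singleton _).compl
        fun y ↦ f (‖y‖⁻¹ • y) * w ‖y‖, restrict_compl_singleton]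
    _ = ∫ z, f z.1 * w z.2 ∂μ.toSphere.prod (.volumeIoiPow (finrank ℝ E - 1)) := by
      simpa using μ.measurePreserving_homeomorphUnitSphereProd.integral_comp
        (Homeomorph.measurableEmbedding _) fun z ↦ f z.1 * w z.2
    _ = (∫ t : sphere (0 : E) 1, f t ∂μ.toSphere) *
          ∫ r : Ioi (0 : ℝ), w r ∂.volumeIoiPow (finrank ℝ E - 1) :=
      integral_prod_mul (fun t : sphere (0 : E) 1 ↦ f t) fun r : Ioi (0 : ℝ) ↦ w r
    _ = _ := by
      simp only [Measure.volumeIoiPow, ENNReal.ofReal]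
      rw [integral_withDensity_eq_integral_smul
          (measurable_subtype_coe.pow_const _).real_toNNReal,
        integral_subtype_comap measurableSet_Ioi
          fun a ↦ Real.toNNReal (a ^ (finrank ℝ E - 1)) • w a,
        setIntegral_congr_fun measurableSet_Ioi fun r hr ↦ ?_]
      rw [NNReal.smul_def, Real.coe_toNNReal _ (pow_nonneg hr.out.le _), smul_eq_mul]

section InnerProductSpace

variable {E : Type*} [NormedAddCommGroup E] [InnerProductSpace ℝ E]

theorem exists_norm_eq_one_forall_inner_eq_norm_mul [Nontrivial E] (x : E) :
    ∃ u : E, ‖u‖ = 1 ∧ ∀ y, ⟪x, y⟫ = ‖x‖ * ⟪u, y⟫ := by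
  rcases eq_or_ne x 0 with rfl | hx
  · obtain ⟨u, hu⟩ := exists_norm_eq E zero_le_one
    exact ⟨u, hu, by simp⟩
  · refine ⟨‖x‖⁻¹ • x, by simp [norm_smul, hx], fun y ↦ ?_⟩
    rw [real_inner_smul_left, mul_inv_cancel_left₀ (norm_ne_zero_iff.2 hx)]

variable [FiniteDimensional ℝ E] [MeasurableSpace E] [BorelSpace E]

theorem integral_fun_inner_mul_exp_neg_norm_sq {u : E} (hu : ‖u‖ = 1) (g : ℝ → ℝ) :
    ∫ y, g ⟪u, y⟫ * exp (-‖y‖ ^ 2) = (∫ s, g s * exp (-s ^ 2)) * √π ^ (finrank ℝ E - 1) := by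
  have : Nontrivial E := ⟨⟨u, 0, by rintro rfl; simp at hu⟩⟩
  let i₀ : Fin (finrank ℝ E) := ⟨0, finrank_pos⟩
  have hu' : Orthonormal ℝ (({i₀} : Set (Fin (finrank ℝ E))).domRestrict fun _ ↦ u) :=
    ⟨fun _ ↦ hu, fun i j hij ↦ (hij (Subsingleton.elim i j)).elim⟩
  obtain ⟨b, hb⟩ := hu'.exists_orthonormalBasis_extension_of_card_eq (by simp)
  rw [← Fintype.card_fin (finrank ℝ E), ← EuclideanSpace.integral_fun_apply_mul_exp_neg_norm_sq i₀,
    ← b.measurePreserving_measurableEquiv.integral_comp']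
  simp [OrthonormalBasis.measurableEquiv, b.repr_apply_apply, hb i₀ rfl]

variable [Nontrivial E]

theorem integral_toSphere_inner_pow_mul_Gamma (x : E) (n : ℕ) :
    (∫ t : sphere (0 : E) 1, ⟪x, t⟫ ^ n ∂volume.toSphere) * (Gamma ((n + finrank ℝ E) / 2) / 2)
      = ‖x‖ ^ n * (∫ s, s ^ n * exp (-s ^ 2)) * √π ^ (finrank ℝ E - 1) := by
  have hd : 0 < finrank ℝ E := finrank_pos
  obtain ⟨u, hu, hxu⟩ := exists_norm_eq_one_forall_inner_eq_norm_mul x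
  have radial : ∫ r in Ioi (0 : ℝ), r ^ (finrank ℝ E - 1) * (r ^ n * exp (-r ^ 2))
      = Gamma ((n + finrank ℝ E) / 2) / 2 := by
    simp_rw [← mul_assoc, ← pow_add]
    rw [integral_Ioi_pow_mul_exp_neg_sq, Nat.cast_add, Nat.cast_pred hd]
    ring_nf
  have rescale (y : E) : ⟪x, ‖y‖⁻¹ • y⟫ * ‖y‖ = ⟪x, y⟫ := by
    rcases eq_or_ne y 0 with rfl | hy
    · simp
    · rw [real_inner_smul_right]
      field_simp [norm_ne_zero_iff.2 hy]
  calc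
    _ = ∫ y, ⟪x, ‖y‖⁻¹ • y⟫ ^ n * (‖y‖ ^ n * exp (-‖y‖ ^ 2)) := by
      rw [← radial]
      exact (integral_fun_unit_mul_fun_norm_addHaar volume (fun y ↦ ⟪x, y⟫ ^ n)
        fun r ↦ r ^ n * exp (-r ^ 2)).symm
    _ = ∫ y, ‖x‖ ^ n * (⟪u, y⟫ ^ n * exp (-‖y‖ ^ 2)) := by
      congr 1 with y
      rw [← mul_assoc, ← mul_pow, rescale, hxu, mul_pow, mul_assoc]
    _ = _ := by
      rw [integral_const_mul, integral_fun_inner_mul_exp_neg_norm_sq hu (· ^ n), mul_assoc]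

theorem integral_toSphere_inner_pow_of_odd (x : E) {n : ℕ} (hn : Odd n) :
    ∫ t : sphere (0 : E) 1, ⟪x, t⟫ ^ n ∂volume.toSphere = 0 := by
  have hΓ : 0 < Gamma ((n + finrank ℝ E) / 2) / 2 := by
    have := finrank_pos (R := ℝ) (M := E)
    positivity
  simpa [integral_pow_mul_exp_neg_sq_of_odd hn, hΓ.ne'] using
    integral_toSphere_inner_pow_mul_Gamma x n

theorem integral_toSphere_inner_pow_two_mul (x : E) (j : ℕ) :
    ∫ t : sphere (0 : E) 1, ⟪x, t⟫ ^ (2 * j) ∂volume.toSphere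
      = 2 * π ^ ((finrank ℝ E - 1 : ℝ) / 2) *
          (Gamma (j + 1 / 2) / Gamma (finrank ℝ E / 2 + j)) * ‖x‖ ^ (2 * j) := by
  have hd : 0 < finrank ℝ E := finrank_pos
  have hΓ : Gamma (finrank ℝ E / 2 + j) ≠ 0 := (Gamma_pos_of_pos (by positivity)).ne'
  have hπ : √π ^ (finrank ℝ E - 1) = π ^ ((finrank ℝ E - 1 : ℝ) / 2) := by
    rw [sqrt_eq_rpow, ← rpow_natCast, ← rpow_mul pi_pos.le, Nat.cast_pred hd]
    ring_nf
  have h := integral_toSphere_inner_pow_mul_Gamma x (2 * j)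
  rw [integral_pow_two_mul_mul_exp_neg_sq, hπ, Nat.cast_mul, Nat.cast_two,
    show (2 * j + finrank ℝ E : ℝ) / 2 = finrank ℝ E / 2 + j by ring] at h
  field_simp at h ⊢
  linear_combination h

end InnerProductSpace

theorem Finset.sum_range_succ_eq_sum_range_two_mul {M : Type*} [AddCommMonoid M] {f : ℕ → M}
    (hf : ∀ i, Odd i → f i = 0) (k : ℕ) :
    ∑ i ∈ range (k + 1), f i = ∑ j ∈ range (k / 2 + 1), f (2 * j) := by
  symm
  rw [← sum_image (g := (2 * ·)) fun _ _ _ _ ↦ Nat.eq_of_mul_eq_mul_left two_pos]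
  refine sum_subset (fun i ↦ ?_) fun i hi hi' ↦ hf i ?_
  · simp only [mem_image, mem_range]
    omega
  · simp only [mem_image, mem_range, not_exists, not_and] at hi hi'
    exact Nat.not_even_iff_odd.1 fun ⟨j, hj⟩ ↦ hi' j (by omega) (by omega)

theorem integral_ofReal_add_const_pow {X : Type*} [TopologicalSpace X] [CompactSpace X]
    [MeasurableSpace X] [OpensMeasurableSpace X] (μ : Measure X) [IsFiniteMeasure μ]
    {f : X → ℝ} (hf : Continuous f) (c : ℂ) (k : ℕ) :
    ∫ t, ((f t : ℂ) + c) ^ k ∂μ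
      = ∑ i ∈ Finset.range (k + 1), ((∫ t, f t ^ i ∂μ : ℝ) : ℂ) * c ^ (k - i) * k.choose i := by
  simp_rw [add_pow]
  rw [integral_finsetSum _ fun i _ ↦ ?_]
  · simp_rw [integral_mul_const]
    congr! with i
    exact_mod_cast integral_ofReal (𝕜 := ℂ)
  · exact ((Complex.continuous_ofReal.comp hf).pow i |>.mul continuous_const |>.mul
      continuous_const).integrable_of_hasCompactSupport (.of_compactSpace _)

theorem stmt9 (p : ℕ) (hp : 2 ≤ p) (k : ℕ) (c : ℂ) (x : EuclideanSpace ℝ (Fin p)) :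
    (∫ t : sphere (0 : EuclideanSpace ℝ (Fin p)) 1,
        ((⟪x, (t : EuclideanSpace ℝ (Fin p))⟫ : ℂ) + c) ^ k
        ∂(volume : Measure (EuclideanSpace ℝ (Fin p))).toSphere)
      = ∑ j ∈ Finset.range (k / 2 + 1),
          (k.choose (2 * j) : ℂ) *
            ((2 * Real.pi ^ (((p : ℝ) - 1) / 2) *
              (Real.Gamma ((j : ℝ) + 1 / 2) / Real.Gamma ((p : ℝ) / 2 + j)) : ℝ) : ℂ) *
            (‖x‖ : ℂ) ^ (2 * j) * c ^ (k - 2 * j) := by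
  have : NeZero p := ⟨by omega⟩
  rw [integral_ofReal_add_const_pow _
      (f := fun t : sphere (0 : EuclideanSpace ℝ (Fin p)) 1 ↦ ⟪x, (t : EuclideanSpace ℝ (Fin p))⟫)
      (continuous_const.inner continuous_subtype_val),
    Finset.sum_range_succ_eq_sum_range_two_mul fun i hi ↦ by
      simp [integral_toSphere_inner_pow_of_odd x hi]]
  refine Finset.sum_congr rfl fun j _ ↦ ?_
  rw [integral_toSphere_inner_pow_two_mul, finrank_euclideanSpace_fin]
  push_cast
  ring
end

section
/- Let p, q ≥ 1, let Cl_{p+q} be the real Clifford algebra of Q(v) = -‖v‖² on EuclideanSpace ℝ (Fin (p+q)) with embedding ι, and let s be a unit vector of ℝ^q, regarded as a vector s̃ of ℝ^{p+q} supported in the last q coordinates. Let N ∈ ℕ and let C_j, D_j : ℝ → ℝ (j ∈ ℕ) be differentiable functions with C_j = D_j = 0 for all j ≥ N. Set β_j = -j for j even and β_j = -(j + p - 1) for j odd, and for x ∈ ℝ^p write x̃ for x regarded as a vector of ℝ^{p+q} supported in the first p coordinates. Define F(x,y) = Σ_{j=0}^{N} (ι(x̃))^j * ( C_j(⟨y,s⟩)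 • 1 + D_j(⟨y,s⟩) • ι(s̃) ). Then F is monogenic on all of ℝ^{p+q} (i.e. (∂_x + ∂_y)F = 0 everywhere) if and only if for all j ∈ ℕ and all t ∈ ℝ: β_{j+1} C_{j+1}(t) = (-1)^j D_j'(t) and β_{j+1} D_{j+1}(t) = -(-1)^j C_j'(t). -/
open MeasureTheory Metric
open scoped RealInnerProductSpace

noncomputable section

/-- Weak (Pettis-style) directional derivative: `f` has derivative `d` at `a` in direction `v`
iff every real-linear functional of `f` along the line `a + t • v` has derivative `ℓ d` at `t = 0`.
For finite-dimensional codomains this coincides with the usual directional derivative. -/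
def HasPDeriv {E A : Type*} [NormedAddCommGroup E] [NormedSpace ℝ E]
    [AddCommGroup A] [Module ℝ A] (f : E → A) (a v : E) (d : A) : Prop :=
  ∀ ℓ : A →ₗ[ℝ] ℝ, HasDerivAt (fun t : ℝ => ℓ (f (a + t • v))) (ℓ d) 0

/-- The Dirac derivative of `f` at `a` equals `D`: the partial derivatives of `f` at `a`
in the standard coordinate directions exist and `∑ⱼ ι(eⱼ) * ∂ⱼf(a) = D`. -/
def DiracDerivEq {m : ℕ} {Q : QuadraticForm ℝ (EuclideanSpace ℝ (Fin m))}
    (f : EuclideanSpace ℝ (Fin m) → CliffordAlgebra Q)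
    (a : EuclideanSpace ℝ (Fin m)) (D : CliffordAlgebra Q) : Prop :=
  ∃ d : Fin m → CliffordAlgebra Q,
    (∀ j, HasPDeriv f a (EuclideanSpace.single j 1) (d j)) ∧
    ∑ j, CliffordAlgebra.ι Q (EuclideanSpace.single j 1) * d j = D

variable (p q : ℕ) in
/-- The first `p` coordinates of a point of `ℝ^{p+q}`. -/
def xpart (z : EuclideanSpace ℝ (Fin (p + q))) : EuclideanSpace ℝ (Fin p) :=
  (WithLp.equiv 2 (Fin p → ℝ)).symm fun i => z (Fin.castAdd q i)

variable (p q : ℕ) in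
/-- The last `q` coordinates of a point of `ℝ^{p+q}`. -/
def ypart (z : EuclideanSpace ℝ (Fin (p + q))) : EuclideanSpace ℝ (Fin q) :=
  (WithLp.equiv 2 (Fin q → ℝ)).symm fun i => z (Fin.natAdd p i)

variable (p q : ℕ) in
/-- A vector of `ℝ^p` regarded as a vector of `ℝ^{p+q}` supported in the first `p` coordinates. -/
def embX (x : EuclideanSpace ℝ (Fin p)) : EuclideanSpace ℝ (Fin (p + q)) :=
  (WithLp.equiv 2 (Fin (p + q) → ℝ)).symm (Fin.addCases (fun i => x i) fun _ => 0)

variable (p q : ℕ) in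
/-- A vector of `ℝ^q` regarded as a vector of `ℝ^{p+q}` supported in the last `q` coordinates. -/
def embY (y : EuclideanSpace ℝ (Fin q)) : EuclideanSpace ℝ (Fin (p + q)) :=
  (WithLp.equiv 2 (Fin (p + q) → ℝ)).symm (Fin.addCases (fun _ => 0) fun i => y i)

variable (p : ℕ) in
/-- `β_j = -j` for `j` even and `β_j = -(j + p - 1)` for `j` odd. -/
def βcoef (j : ℕ) : ℝ := if Even j then -(j : ℝ) else -((j : ℝ) + p - 1)

/-!
Write `X = ι x̃` and `S = ι s̃`. In a direction `eᵢ` of `ℝ^p` the derivative of `X ^ j` is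
`∑_{r<j} X^r eᵢ X^(j-1-r)`, and contracting with the generators uses
`∑ᵢ eᵢ X^r eᵢ = -p X^r` (`r` even) and `(p - 2) X^r` (`r` odd), which add up to `β_j X^(j-1)`.
In the `y`-directions the derivative is `S` times the `t`-derivative, and `S` anticommutes with `X`.
Hence `∂F = ∑_j X^j (α_j + γ_j S)` where `α_j = 0`, `γ_j = 0` are the two recurrences.
Conversely, along `x = r e₀` this is a polynomial in `r` with coefficients `e₀^j (α_j + γ_j S)`;
`e₀` is invertible and `1, S` are independent since `S² = -1`, so `α_j = γ_j = 0`.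
-/

section WeakDeriv

variable {A : Type*} [AddCommGroup A] [Module ℝ A]

def HasWeakDerivAt (g : ℝ → A) (g' : A) (t : ℝ) : Prop :=
  ∀ ℓ : A →ₗ[ℝ] ℝ, HasDerivAt (fun τ => ℓ (g τ)) (ℓ g') t

theorem hasPDeriv_iff_hasWeakDerivAt {E : Type*} [NormedAddCommGroup E] [NormedSpace ℝ E]
    {f : E → A} {a v : E} {d : A} :
    HasPDeriv f a v d ↔ HasWeakDerivAt (fun τ => f (a + τ • v)) d 0 :=
  Iff.rfl

variable {g h : ℝ → A} {g' h' : A} {t : ℝ}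

theorem HasWeakDerivAt.unique (hg : HasWeakDerivAt g g' t) (hh : HasWeakDerivAt g h' t) :
    g' = h' := by
  rw [← sub_eq_zero, ← Module.forall_dual_apply_eq_zero_iff ℝ]
  intro ℓ
  rw [map_sub, sub_eq_zero]
  exact (hg ℓ).unique (hh ℓ)

theorem hasWeakDerivAt_const (v : A) : HasWeakDerivAt (fun _ => v) 0 t := fun ℓ => by
  simpa using hasDerivAt_const t (ℓ v)

theorem HasWeakDerivAt.add (hg : HasWeakDerivAt g g' t) (hh : HasWeakDerivAt h h' t) :
    HasWeakDerivAt (fun τ => g τ + h τ) (g' + h') t := fun ℓ => by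
  simpa only [map_add] using (hg ℓ).fun_add (hh ℓ)

theorem HasWeakDerivAt.sum {ι : Type*} {s : Finset ι} {g : ι → ℝ → A} {g' : ι → A}
    (hg : ∀ i ∈ s, HasWeakDerivAt (g i) (g' i) t) :
    HasWeakDerivAt (fun τ => ∑ i ∈ s, g i τ) (∑ i ∈ s, g' i) t := fun ℓ => by
  simpa using HasDerivAt.fun_sum fun i hi => hg i hi ℓ

theorem HasWeakDerivAt.smul {c : ℝ → ℝ} {c' : ℝ} (hc : HasDerivAt c c' t)
    (hg : HasWeakDerivAt g g' t) :
    HasWeakDerivAt (fun τ => c τ • g τ) (c' • g t + c t • g') t := fun ℓ => by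
  simpa only [map_add, map_smul, smul_eq_mul] using hc.fun_mul (hg ℓ)

theorem HasDerivAt.hasWeakDerivAt_smul_const {c : ℝ → ℝ} {c' : ℝ} (hc : HasDerivAt c c' t)
    (v : A) : HasWeakDerivAt (fun τ => c τ • v) (c' • v) t := fun ℓ => by
  simpa using hc.mul_const (ℓ v)

theorem HasWeakDerivAt.comp_add_mul (hg : HasWeakDerivAt g g' t) (c : ℝ) :
    HasWeakDerivAt (fun τ => g (t + τ * c)) (c • g') 0 := fun ℓ => by
  have haff : HasDerivAt (fun τ : ℝ => t + τ * c) c 0 := by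
    simpa using ((hasDerivAt_id (0 : ℝ)).mul_const c).const_add t
  simpa only [Function.comp_def, map_smul, smul_eq_mul, mul_comm] using
    (hg ℓ).comp_of_eq 0 haff (by simp)

end WeakDeriv

section WeakDerivMul

variable {A : Type*} [Ring A] [Algebra ℝ A] {g : ℝ → A} {g' : A} {t : ℝ}

theorem HasWeakDerivAt.const_mul (X : A) (hg : HasWeakDerivAt g g' t) :
    HasWeakDerivAt (fun τ => X * g τ) (X * g') t := fun ℓ =>
  hg (ℓ.comp (LinearMap.mulLeft ℝ X))

theorem HasWeakDerivAt.mul_const (hg : HasWeakDerivAt g g' t) (X : A) :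
    HasWeakDerivAt (fun τ => g τ * X) (g' * X) t := fun ℓ =>
  hg (ℓ.comp (LinearMap.mulRight ℝ X))

def pderivPow (X E : A) : ℕ → A
  | 0 => 0
  | j + 1 => pderivPow X E j * X + X ^ j * E

theorem hasWeakDerivAt_add_smul_pow (X E : A) (j : ℕ) :
    HasWeakDerivAt (fun τ : ℝ => (X + τ • E) ^ j) (pderivPow X E j) 0 := by
  induction j with
  | zero => simpa [pderivPow] using hasWeakDerivAt_const (1 : A)
  | succ j ih =>
    have h := (ih.mul_const X).add (HasWeakDerivAt.smul (hasDerivAt_id 0) (ih.mul_const E))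
    simp only [id, zero_smul, one_smul, add_zero] at h
    simpa only [pow_succ, mul_add, mul_smul_comm, pderivPow] using h

end WeakDerivMul

theorem eq_zero_of_forall_sum_pow_smul_eq_zero {M : Type*} [AddCommGroup M] [Module ℝ M] {n : ℕ}
    {v : ℕ → M} (h : ∀ r : ℝ, ∑ k ∈ Finset.range n, r ^ k • v k = 0) {k : ℕ}
    (hk : k < n) : v k = 0 := by
  rw [← Module.forall_dual_apply_eq_zero_iff ℝ]
  intro ℓ
  set P : Polynomial ℝ := ∑ j ∈ Finset.range n, Polynomial.monomial j (ℓ (v j))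
  have hP : P = 0 := Polynomial.funext fun r => by
    simpa [P, Polynomial.eval_finsetSum, mul_comm] using congrArg ℓ (h r)
  simpa [P, Polynomial.finsetSum_coeff, Polynomial.coeff_monomial, hk] using
    congrArg (Polynomial.coeff · k) hP

section CliffordNegativeDefinite

open CliffordAlgebra

variable {V : Type*} [NormedAddCommGroup V] [InnerProductSpace ℝ V] {Q : QuadraticForm ℝ V}

theorem ι_mul_ι_add_swap_of_eq_neg_norm_sq (hQ : ∀ v, Q v = -‖v‖ ^ 2) (u v : V) :
    ι Q u * ι Q v + ι Q v * ι Q u = algebraMap ℝ _ (-2 * ⟪u, v⟫) := by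
  rw [ι_mul_ι_add_swap, QuadraticMap.polar, hQ, hQ, hQ, norm_add_sq_real]
  ring_nf

theorem ι_mul_self_of_norm_eq_one (hQ : ∀ v, Q v = -‖v‖ ^ 2) {v : V} (hv : ‖v‖ = 1) :
    ι Q v * ι Q v = -1 := by
  rw [ι_sq_scalar, hQ, hv]
  simp

theorem ι_mul_ι_pow_of_inner_eq_zero (hQ : ∀ v, Q v = -‖v‖ ^ 2) {u v : V}
    (h : ⟪u, v⟫ = 0) (j : ℕ) :
    ι Q u * ι Q v ^ j = (-1 : ℝ) ^ j • (ι Q v ^ j * ι Q u) := by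
  have hanti : ι Q u * ι Q v = -(ι Q v * ι Q u) := by
    rw [eq_neg_iff_add_eq_zero, ι_mul_ι_add_swap_of_eq_neg_norm_sq hQ, h, mul_zero, map_zero]
  induction j with
  | zero => simp
  | succ j ih =>
    rw [pow_succ, ← mul_assoc, ih, smul_mul_assoc, mul_assoc, hanti, pow_succ, mul_neg,
      smul_neg, ← neg_smul, ← mul_assoc, mul_neg_one]

variable {ι' W : Type*} [Fintype ι'] [NormedAddCommGroup W] [InnerProductSpace ℝ W]

theorem sum_ι_mul_pow_mul_ι (hQ : ∀ v, Q v = -‖v‖ ^ 2) (b : OrthonormalBasis ι' ℝ W)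
    (J : W →ₗᵢ[ℝ] V) (w : W) (r : ℕ) :
    ∑ i, ι Q (J (b i)) * ι Q (J w) ^ r * ι Q (J (b i)) =
      (if Even r then -(Fintype.card ι' : ℝ) else Fintype.card ι' - 2) • ι Q (J w) ^ r := by
  have hsq (i : ι') : ι Q (J (b i)) * ι Q (J (b i)) = -1 :=
    ι_mul_self_of_norm_eq_one hQ (by simp)
  induction r using Nat.twoStepInduction with
  | zero => simp [hsq, Nat.cast_smul_eq_nsmul]
  | one =>
    have hconj (i : ι') : ι Q (J (b i)) * ι Q (J w) * ι Q (J (b i)) =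
        ι Q (J w) - (2 * ⟪b i, w⟫) • ι Q (J (b i)) := by
      have h := ι_mul_ι_add_swap_of_eq_neg_norm_sq hQ (J (b i)) (J w)
      rw [LinearIsometry.inner_map_map, Algebra.algebraMap_eq_smul_one] at h
      rw [eq_sub_of_add_eq h, sub_mul, mul_assoc, hsq, mul_neg_one, smul_mul_assoc, one_mul]
      module
    have hsum : ∑ i, ⟪b i, w⟫ • ι Q (J (b i)) = ι Q (J w) := by
      simp_rw [← map_smul, ← map_sum, b.sum_repr']
    simp only [pow_one, hconj, Finset.sum_sub_distrib, Finset.sum_const, Finset.card_univ,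
      mul_smul, ← Finset.smul_sum, hsum, Nat.not_even_one, if_false]
    rw [← Nat.cast_smul_eq_nsmul ℝ]
    module
  | more r ih _ =>
    have hcentral : ι Q (J w) ^ (r + 2) = (-‖J w‖ ^ 2) • ι Q (J w) ^ r := by
      rw [pow_add, pow_two, ι_sq_scalar, hQ, Algebra.smul_def, Algebra.commutes]
    have heven : Even (r + 2) ↔ Even r := by simp [Nat.even_add]
    simp only [hcentral, mul_smul_comm, smul_mul_assoc, ← Finset.smul_sum, ih, heven]
    exact smul_comm _ _ _

theorem βcoef_add_two (p j : ℕ) :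
    βcoef p (j + 2) = βcoef p (j + 1) + if Even (j + 1) then -(p : ℝ) else p - 2 := by
  rcases Nat.even_or_odd (j + 1) with h | h
  · have h' : ¬Even (j + 2) := by rw [Nat.even_add_one.not, not_not]; exact h
    simp only [βcoef, h, h', if_true, if_false]
    push_cast
    ring
  · have h' : Even (j + 2) := Nat.even_add_one.mpr (Nat.not_even_iff_odd.mpr h)
    simp only [βcoef, h', Nat.not_even_iff_odd.mpr h, if_true, if_false]
    push_cast
    ring

theorem sum_ι_mul_pderivPow (hQ : ∀ v, Q v = -‖v‖ ^ 2) (b : OrthonormalBasis ι' ℝ W)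
    (J : W →ₗᵢ[ℝ] V) (w : W) (j : ℕ) :
    ∑ i, ι Q (J (b i)) * pderivPow (ι Q (J w)) (ι Q (J (b i))) (j + 1) =
      βcoef (Fintype.card ι') (j + 1) • ι Q (J w) ^ j := by
  induction j with
  | zero =>
    simp only [pderivPow, zero_mul, pow_zero, one_mul, zero_add]
    simpa [βcoef] using sum_ι_mul_pow_mul_ι hQ b J w 0
  | succ j ih =>
    have hstep (i : ι') : ι Q (J (b i)) * pderivPow (ι Q (J w)) (ι Q (J (b i))) (j + 2) =
        ι Q (J (b i)) * pderivPow (ι Q (J w)) (ι Q (J (b i))) (j + 1) * ι Q (J w) +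
          ι Q (J (b i)) * ι Q (J w) ^ (j + 1) * ι Q (J (b i)) := by
      rw [pderivPow, mul_add, mul_assoc, mul_assoc]
    simp only [hstep, Finset.sum_add_distrib, ← Finset.sum_mul, ih, sum_ι_mul_pow_mul_ι hQ,
      βcoef_add_two, add_smul, smul_mul_assoc, ← pow_succ]

theorem sum_ι_mul_sum_pderivPow_mul (hQ : ∀ v, Q v = -‖v‖ ^ 2)
    (b : OrthonormalBasis ι' ℝ W) (J : W →ₗᵢ[ℝ] V) (w : W) (n : ℕ)
    (c : ℕ → CliffordAlgebra Q) :
    ∑ i, ι Q (J (b i)) * ∑ j ∈ Finset.range (n + 1),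
        pderivPow (ι Q (J w)) (ι Q (J (b i))) j * c j =
      ∑ j ∈ Finset.range n,
        βcoef (Fintype.card ι') (j + 1) • (ι Q (J w) ^ j * c (j + 1)) := by
  simp only [Finset.mul_sum, ← mul_assoc]
  rw [Finset.sum_comm, Finset.sum_range_succ']
  simp only [← Finset.sum_mul, sum_ι_mul_pderivPow hQ, smul_mul_assoc, pderivPow.eq_1, mul_zero,
    zero_mul, Finset.sum_const_zero, add_zero]

theorem eq_zero_of_forall_sum_ι_smul_pow_mul_eq_zero (hQ : ∀ v, Q v = -‖v‖ ^ 2) {u : V}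
    (hu : ‖u‖ = 1) {n k : ℕ} {w : ℕ → CliffordAlgebra Q}
    (h : ∀ r : ℝ, ∑ j ∈ Finset.range n, ι Q (r • u) ^ j * w j = 0) (hk : k < n) :
    w k = 0 := by
  have hsq := ι_mul_self_of_norm_eq_one hQ hu
  have hunit : IsUnit (ι Q u) :=
    ⟨⟨ι Q u, -ι Q u, by rw [mul_neg, hsq, neg_neg], by rw [neg_mul, hsq, neg_neg]⟩, rfl⟩
  refine (hunit.pow k).mul_right_eq_zero.mp
    (eq_zero_of_forall_sum_pow_smul_eq_zero (v := fun j => ι Q u ^ j * w j) (fun r => ?_) hk)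
  simpa only [map_smul, smul_pow, smul_mul_assoc] using h r

end CliffordNegativeDefinite

theorem smul_one_add_smul_eq_zero_iff {A : Type*} [Ring A] [Algebra ℝ A] [Nontrivial A] {S : A}
    (hS : S * S = -1) {a b : ℝ} : a • (1 : A) + b • S = 0 ↔ a = 0 ∧ b = 0 := by
  refine ⟨fun h => ?_, fun ⟨ha, hb⟩ => by simp [ha, hb]⟩
  have hS' : a • S - b • (1 : A) = S * (a • 1 + b • S) := by
    rw [mul_add, mul_smul_comm, mul_smul_comm, mul_one, hS]
    module
  have hsum : (a ^ 2 + b ^ 2) • (1 : A) = 0 := by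
    rw [show (a ^ 2 + b ^ 2) • (1 : A) = a • (a • 1 + b • S) - b • (a • S - b • 1) by
      module, hS', h, mul_zero, smul_zero, smul_zero, sub_zero]
  have := (smul_eq_zero.mp hsum).resolve_right one_ne_zero
  constructor <;> nlinarith [sq_nonneg a, sq_nonneg b]

section Coordinates

open EuclideanSpace

variable {p q : ℕ}

@[simp] theorem Fin.natAdd_ne_castAdd (k : Fin q) (i : Fin p) :
    Fin.natAdd p k ≠ Fin.castAdd q i :=
  Fin.ne_of_val_ne (by simp only [Fin.val_natAdd, Fin.val_castAdd]; omega)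

@[simp] theorem embX_apply_castAdd (x : EuclideanSpace ℝ (Fin p)) (i : Fin p) :
    embX p q x (Fin.castAdd q i) = x i := by
  simp [embX]

@[simp] theorem embX_apply_natAdd (x : EuclideanSpace ℝ (Fin p)) (i : Fin q) :
    embX p q x (Fin.natAdd p i) = 0 := by
  simp [embX]

@[simp] theorem embY_apply_castAdd (y : EuclideanSpace ℝ (Fin q)) (i : Fin p) :
    embY p q y (Fin.castAdd q i) = 0 := by
  simp [embY]

@[simp] theorem embY_apply_natAdd (y : EuclideanSpace ℝ (Fin q)) (i : Fin q) :
    embY p q y (Fin.natAdd p i) = y i := by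
  simp [embY]

@[simp] theorem xpart_apply (z : EuclideanSpace ℝ (Fin (p + q))) (i : Fin p) :
    xpart p q z i = z (Fin.castAdd q i) := rfl

@[simp] theorem ypart_apply (z : EuclideanSpace ℝ (Fin (p + q))) (i : Fin q) :
    ypart p q z i = z (Fin.natAdd p i) := rfl

variable (p q) in
def embXₗᵢ : EuclideanSpace ℝ (Fin p) →ₗᵢ[ℝ] EuclideanSpace ℝ (Fin (p + q)) where
  toFun := embX p q
  map_add' x x' := by ext k; induction k using Fin.addCases <;> simp
  map_smul' c x := by ext k; induction k using Fin.addCases <;> simp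
  norm_map' x := by simp [EuclideanSpace.norm_eq, Fin.sum_univ_add]

@[simp] theorem embXₗᵢ_apply (x : EuclideanSpace ℝ (Fin p)) : embXₗᵢ p q x = embX p q x :=
  rfl

@[simp] theorem norm_embX (x : EuclideanSpace ℝ (Fin p)) : ‖embX p q x‖ = ‖x‖ :=
  (embXₗᵢ p q).norm_map x

@[simp] theorem norm_embY (y : EuclideanSpace ℝ (Fin q)) : ‖embY p q y‖ = ‖y‖ := by
  simp [EuclideanSpace.norm_eq, Fin.sum_univ_add]

theorem embX_add (x x' : EuclideanSpace ℝ (Fin p)) :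
    embX p q (x + x') = embX p q x + embX p q x' :=
  (embXₗᵢ p q).map_add x x'

theorem embX_smul (c : ℝ) (x : EuclideanSpace ℝ (Fin p)) :
    embX p q (c • x) = c • embX p q x :=
  (embXₗᵢ p q).map_smul c x

theorem embX_single (i : Fin p) :
    embX p q (single i 1) = single (Fin.castAdd q i) 1 := by
  ext k
  induction k using Fin.addCases <;> simp [PiLp.single_apply]

theorem inner_embX_embY (x : EuclideanSpace ℝ (Fin p)) (y : EuclideanSpace ℝ (Fin q)) :
    ⟪embX p q x, embY p q y⟫ = 0 := by
  simp [PiLp.inner_apply, Fin.sum_univ_add]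

theorem xpart_embX_add_embY (x : EuclideanSpace ℝ (Fin p)) (y : EuclideanSpace ℝ (Fin q)) :
    xpart p q (embX p q x + embY p q y) = x := by
  ext i; simp

theorem ypart_embX_add_embY (x : EuclideanSpace ℝ (Fin p)) (y : EuclideanSpace ℝ (Fin q)) :
    ypart p q (embX p q x + embY p q y) = y := by
  ext i; simp

theorem xpart_add_smul_single_castAdd (z : EuclideanSpace ℝ (Fin (p + q))) (τ : ℝ)
    (i : Fin p) :
    xpart p q (z + τ • single (Fin.castAdd q i) 1) =
      xpart p q z + τ • single i 1 := by
  ext k; simp [PiLp.single_apply]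

theorem ypart_add_smul_single_castAdd (z : EuclideanSpace ℝ (Fin (p + q))) (τ : ℝ)
    (i : Fin p) :
    ypart p q (z + τ • single (Fin.castAdd q i) 1) = ypart p q z := by
  ext k; simp

theorem xpart_add_smul_single_natAdd (z : EuclideanSpace ℝ (Fin (p + q))) (τ : ℝ) (i : Fin q) :
    xpart p q (z + τ • single (Fin.natAdd p i) 1) = xpart p q z := by
  ext k; simp

theorem ypart_add_smul_single_natAdd (z : EuclideanSpace ℝ (Fin (p + q))) (τ : ℝ) (i : Fin q) :
    ypart p q (z + τ • single (Fin.natAdd p i) 1) =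
      ypart p q z + τ • single i 1 := by
  ext k; simp [PiLp.single_apply]

end Coordinates

section Dirac

open CliffordAlgebra EuclideanSpace

theorem diracDerivEq_iff_of_hasPDeriv {m : ℕ} {Q : QuadraticForm ℝ (EuclideanSpace ℝ (Fin m))}
    {f : EuclideanSpace ℝ (Fin m) → CliffordAlgebra Q} {a : EuclideanSpace ℝ (Fin m)}
    {d : Fin m → CliffordAlgebra Q} (hd : ∀ j, HasPDeriv f a (single j 1) (d j))
    {w : CliffordAlgebra Q} :
    DiracDerivEq f a w ↔ ∑ j, ι Q (single j 1) * d j = w :=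
  ⟨fun ⟨d', hd', h⟩ => by rwa [funext fun j => HasWeakDerivAt.unique (hd' j) (hd j)] at h,
    fun h => ⟨d, hd, h⟩⟩

theorem diracDerivEq_iff_of_hasPDeriv_castAdd_natAdd {p q : ℕ}
    {Q : QuadraticForm ℝ (EuclideanSpace ℝ (Fin (p + q)))}
    {f : EuclideanSpace ℝ (Fin (p + q)) → CliffordAlgebra Q}
    {a : EuclideanSpace ℝ (Fin (p + q))}
    {dx : Fin p → CliffordAlgebra Q} {dy : Fin q → CliffordAlgebra Q}
    (hx : ∀ i, HasPDeriv f a (single (Fin.castAdd q i) 1) (dx i))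
    (hy : ∀ i, HasPDeriv f a (single (Fin.natAdd p i) 1) (dy i))
    {w : CliffordAlgebra Q} :
    DiracDerivEq f a w ↔
      ∑ i, ι Q (single (Fin.castAdd q i) 1) * dx i +
        ∑ i, ι Q (single (Fin.natAdd p i) 1) * dy i = w := by
  rw [diracDerivEq_iff_of_hasPDeriv (d := Fin.addCases dx dy)
    (Fin.addCases (by simpa using hx) (by simpa using hy)), Fin.sum_univ_add]
  simp only [Fin.addCases_left, Fin.addCases_right]

end Dirac

section PlaneWave

open CliffordAlgebra EuclideanSpace Finset

variable {p q : ℕ} {Q : QuadraticForm ℝ (EuclideanSpace ℝ (Fin (p + q)))}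
  {s : EuclideanSpace ℝ (Fin q)} {N : ℕ} {C D : ℕ → ℝ → ℝ}

variable (p q Q s N C D) in
def planeWave (z : EuclideanSpace ℝ (Fin (p + q))) : CliffordAlgebra Q :=
  ∑ j ∈ range (N + 1), ι Q (embX p q (xpart p q z)) ^ j *
    (C j ⟪ypart p q z, s⟫ • (1 : CliffordAlgebra Q) +
      D j ⟪ypart p q z, s⟫ • ι Q (embY p q s))

theorem hasPDeriv_planeWave_castAdd (a : EuclideanSpace ℝ (Fin (p + q))) (i : Fin p) :
    HasPDeriv (planeWave p q Q s N C D) a (single (Fin.castAdd q i) 1)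
      (∑ j ∈ range (N + 1),
        pderivPow (ι Q (embX p q (xpart p q a))) (ι Q (single (Fin.castAdd q i) 1)) j *
          (C j ⟪ypart p q a, s⟫ • 1 + D j ⟪ypart p q a, s⟫ • ι Q (embY p q s))) := by
  have hline : (fun τ : ℝ => planeWave p q Q s N C D (a + τ • single (Fin.castAdd q i) 1)) =
      fun τ => ∑ j ∈ range (N + 1),
        (ι Q (embX p q (xpart p q a)) + τ • ι Q (single (Fin.castAdd q i) 1)) ^ j *
          (C j ⟪ypart p q a, s⟫ • 1 + D j ⟪ypart p q a, s⟫ • ι Q (embY p q s)) := by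
    funext τ
    simp only [planeWave, xpart_add_smul_single_castAdd, ypart_add_smul_single_castAdd, embX_add,
      embX_smul, embX_single, map_add, map_smul]
  rw [hasPDeriv_iff_hasWeakDerivAt, hline]
  exact HasWeakDerivAt.sum fun j _ => (hasWeakDerivAt_add_smul_pow _ _ j).mul_const _

theorem hasPDeriv_planeWave_natAdd (hCdiff : ∀ j, Differentiable ℝ (C j))
    (hDdiff : ∀ j, Differentiable ℝ (D j)) (a : EuclideanSpace ℝ (Fin (p + q))) (i : Fin q) :
    HasPDeriv (planeWave p q Q s N C D) a (single (Fin.natAdd p i) 1)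
      (s i • ∑ j ∈ range (N + 1), ι Q (embX p q (xpart p q a)) ^ j *
        (deriv (C j) ⟪ypart p q a, s⟫ • 1 +
          deriv (D j) ⟪ypart p q a, s⟫ • ι Q (embY p q s))) := by
  set X := ι Q (embX p q (xpart p q a))
  set S := ι Q (embY p q s)
  set t := ⟪ypart p q a, s⟫
  have hG : HasWeakDerivAt (fun u => ∑ j ∈ range (N + 1), X ^ j * (C j u • 1 + D j u • S))
      (∑ j ∈ range (N + 1), X ^ j * (deriv (C j) t • 1 + deriv (D j) t • S)) t :=
    HasWeakDerivAt.sum fun j _ => HasWeakDerivAt.const_mul _ <|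
      ((hCdiff j t).hasDerivAt.hasWeakDerivAt_smul_const 1).add
        ((hDdiff j t).hasDerivAt.hasWeakDerivAt_smul_const S)
  have hline : (fun τ : ℝ => planeWave p q Q s N C D (a + τ • single (Fin.natAdd p i) 1)) =
      fun τ => ∑ j ∈ range (N + 1),
        X ^ j * (C j (t + τ * s i) • 1 + D j (t + τ * s i) • S) := by
    funext τ
    simp only [planeWave, xpart_add_smul_single_natAdd, ypart_add_smul_single_natAdd,
      inner_add_left, real_inner_smul_left, EuclideanSpace.inner_single_left]
    simp [X, S, t]
  rw [hasPDeriv_iff_hasWeakDerivAt, hline]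
  exact hG.comp_add_mul (s i)

theorem sum_ι_single_natAdd_mul_smul (W : CliffordAlgebra Q) :
    ∑ i, ι Q (single (Fin.natAdd p i) 1) * (s i • W) = ι Q (embY p q s) * W := by
  have hs : embY p q s = ∑ i, s i • single (Fin.natAdd p i) 1 := by
    ext k
    induction k using Fin.addCases <;> simp [Pi.single_apply]
  simp only [hs, map_sum, map_smul, sum_mul, mul_smul_comm, smul_mul_assoc]

theorem ι_embY_mul_self (hQ : ∀ v, Q v = -‖v‖ ^ 2) (hs : ‖s‖ = 1) :
    ι Q (embY p q s) * ι Q (embY p q s) = -1 :=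
  ι_mul_self_of_norm_eq_one hQ (by rw [norm_embY, hs])

theorem ι_embY_mul_sum_pow_mul (hQ : ∀ v, Q v = -‖v‖ ^ 2) (hs : ‖s‖ = 1)
    (x : EuclideanSpace ℝ (Fin p)) (n : ℕ) (c d : ℕ → ℝ) :
    ι Q (embY p q s) *
        ∑ j ∈ range n, ι Q (embX p q x) ^ j * (c j • 1 + d j • ι Q (embY p q s)) =
      ∑ j ∈ range n, ι Q (embX p q x) ^ j *
        ((-1 : ℝ) ^ j • (c j • ι Q (embY p q s) - d j • 1)) := by
  have horth : ⟪embY p q s, embX p q x⟫ = 0 := by rw [real_inner_comm, inner_embX_embY]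
  rw [mul_sum]
  refine sum_congr rfl fun j _ => ?_
  rw [← mul_assoc, ι_mul_ι_pow_of_inner_eq_zero hQ horth, smul_mul_assoc, mul_assoc, mul_add,
    mul_smul_comm, mul_smul_comm, mul_one, ι_embY_mul_self hQ hs, ← mul_smul_comm]
  congr 1
  module

theorem diracDerivEq_planeWave_iff (hQ : ∀ v, Q v = -‖v‖ ^ 2) (hs : ‖s‖ = 1)
    (hCdiff : ∀ j, Differentiable ℝ (C j)) (hDdiff : ∀ j, Differentiable ℝ (D j))
    (hC : C (N + 1) = 0) (hD : D (N + 1) = 0) (a : EuclideanSpace ℝ (Fin (p + q)))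
    (w : CliffordAlgebra Q) :
    DiracDerivEq (planeWave p q Q s N C D) a w ↔
      ∑ j ∈ range (N + 1), ι Q (embX p q (xpart p q a)) ^ j *
        ((βcoef p (j + 1) * C (j + 1) ⟪ypart p q a, s⟫ -
            (-1 : ℝ) ^ j * deriv (D j) ⟪ypart p q a, s⟫) • 1 +
          (βcoef p (j + 1) * D (j + 1) ⟪ypart p q a, s⟫ +
            (-1 : ℝ) ^ j * deriv (C j) ⟪ypart p q a, s⟫) • ι Q (embY p q s)) = w := by
  rw [diracDerivEq_iff_of_hasPDeriv_castAdd_natAdd (hasPDeriv_planeWave_castAdd a)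
    (hasPDeriv_planeWave_natAdd hCdiff hDdiff a), sum_ι_single_natAdd_mul_smul,
    ι_embY_mul_sum_pow_mul hQ hs]
  have hE (i : Fin p) : single (Fin.castAdd q i) 1 =
      embXₗᵢ p q (basisFun (Fin p) ℝ i) := by
    simp [embX_single]
  simp only [hE]
  rw [← embXₗᵢ_apply, sum_ι_mul_sum_pderivPow_mul hQ, Fintype.card_fin, embXₗᵢ_apply]
  have hext (f : ℕ → CliffordAlgebra Q) (hf : f N = 0) :
      ∑ j ∈ range N, f j = ∑ j ∈ range (N + 1), f j := by
    rw [sum_range_succ, hf, add_zero]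
  rw [hext _ (by simp [hC, hD]), ← sum_add_distrib]
  refine Eq.congr_left (sum_congr rfl fun j _ => ?_)
  rw [← mul_smul_comm, ← mul_add]
  congr 1
  module

theorem eq_zero_of_forall_sum_ι_embX_pow_mul_eq_zero (hp : 1 ≤ p)
    (hQ : ∀ v, Q v = -‖v‖ ^ 2) (hs : ‖s‖ = 1) {α γ : ℕ → ℝ → ℝ}
    (H : ∀ a, ∑ j ∈ range (N + 1), ι Q (embX p q (xpart p q a)) ^ j *
      (α j ⟪ypart p q a, s⟫ • 1 + γ j ⟪ypart p q a, s⟫ • ι Q (embY p q s)) = 0)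
    {j : ℕ} (hj : j < N + 1) (t : ℝ) : α j t = 0 ∧ γ j t = 0 := by
  refine (smul_one_add_smul_eq_zero_iff (ι_embY_mul_self hQ hs)).mp ?_
  -- On the line `x = r • e₀`, `⟪y, s⟫ = t` the sum is a polynomial in `r`.
  refine eq_zero_of_forall_sum_ι_smul_pow_mul_eq_zero hQ
    (u := embX p q (single (⟨0, hp⟩ : Fin p) 1)) (by simp)
    (w := fun j => α j t • 1 + γ j t • ι Q (embY p q s)) (fun r => ?_) hj
  have h := H (embX p q (r • single ⟨0, hp⟩ 1) + embY p q (t • s))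
  rwa [xpart_embX_add_embY, ypart_embX_add_embY, embX_smul, real_inner_smul_left,
    real_inner_self_eq_norm_sq, hs, one_pow, mul_one] at h

end PlaneWave

theorem stmt10_general (p q : ℕ) (hp : 1 ≤ p)
    (Q : QuadraticForm ℝ (EuclideanSpace ℝ (Fin (p + q))))
    (hQ : ∀ v, Q v = -‖v‖ ^ 2)
    (s : EuclideanSpace ℝ (Fin q)) (hs : ‖s‖ = 1)
    (N : ℕ) (C D : ℕ → ℝ → ℝ)
    (hCdiff : ∀ j, Differentiable ℝ (C j)) (hDdiff : ∀ j, Differentiable ℝ (D j))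
    (hCN : ∀ j, N ≤ j → C j = 0) (hDN : ∀ j, N ≤ j → D j = 0) :
    (∀ a, DiracDerivEq (fun z =>
        ∑ j ∈ Finset.range (N + 1),
          CliffordAlgebra.ι Q (embX p q (xpart p q z)) ^ j *
            (C j ⟪ypart p q z, s⟫ • (1 : CliffordAlgebra Q) +
              D j ⟪ypart p q z, s⟫ • CliffordAlgebra.ι Q (embY p q s))) a 0)
    ↔ ∀ (j : ℕ) (t : ℝ),
        βcoef p (j + 1) * C (j + 1) t = (-1 : ℝ) ^ j * deriv (D j) t ∧
        βcoef p (j + 1) * D (j + 1) t = -((-1 : ℝ) ^ j * deriv (C j) t) := by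
  change (∀ a, DiracDerivEq (planeWave p q Q s N C D) a 0) ↔ _
  simp only [diracDerivEq_planeWave_iff hQ hs hCdiff hDdiff (hCN _ N.le_succ) (hDN _ N.le_succ)]
  constructor
  · intro H j t
    by_cases hj : j < N + 1
    · obtain ⟨h1, h2⟩ := eq_zero_of_forall_sum_ι_embX_pow_mul_eq_zero hp hQ hs
        (α := fun j t => βcoef p (j + 1) * C (j + 1) t - (-1) ^ j * deriv (D j) t)
        (γ := fun j t => βcoef p (j + 1) * D (j + 1) t + (-1) ^ j * deriv (C j) t) H hj t
      constructor <;> linarith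
    · simp [hCN _ (by omega : N ≤ j), hDN _ (by omega : N ≤ j), hCN (j + 1) (by omega),
        hDN (j + 1) (by omega)]
  · intro H a
    refine Finset.sum_eq_zero fun j _ => ?_
    obtain ⟨h1, h2⟩ := H j ⟪ypart p q a, s⟫
    rw [sub_eq_zero.mpr h1, eq_neg_iff_add_eq_zero.mp h2]
    simp

theorem stmt10 (p q : ℕ) (hp : 1 ≤ p) (hq : 1 ≤ q)
    (Q : QuadraticForm ℝ (EuclideanSpace ℝ (Fin (p + q))))
    (hQ : ∀ v, Q v = -‖v‖ ^ 2)
    (s : EuclideanSpace ℝ (Fin q)) (hs : ‖s‖ = 1)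
    (N : ℕ) (C D : ℕ → ℝ → ℝ)
    (hCdiff : ∀ j, Differentiable ℝ (C j)) (hDdiff : ∀ j, Differentiable ℝ (D j))
    (hCN : ∀ j, N ≤ j → C j = 0) (hDN : ∀ j, N ≤ j → D j = 0) :
    (∀ a, DiracDerivEq (fun z =>
        ∑ j ∈ Finset.range (N + 1),
          CliffordAlgebra.ι Q (embX p q (xpart p q z)) ^ j *
            (C j ⟪ypart p q z, s⟫ • (1 : CliffordAlgebra Q) +
              D j ⟪ypart p q z, s⟫ • CliffordAlgebra.ι Q (embY p q s))) a 0)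
    ↔ ∀ (j : ℕ) (t : ℝ),
        βcoef p (j + 1) * C (j + 1) t = (-1 : ℝ) ^ j * deriv (D j) t ∧
        βcoef p (j + 1) * D (j + 1) t = -((-1 : ℝ) ^ j * deriv (C j) t) :=
  stmt10_general p q hp Q hQ s hs N C D hCdiff hDdiff hCN hDN
end
end

section
/- Let p, q ≥ 1 and let Cl^ℂ_{p+q} be the Clifford algebra of Q(z) = -(z_1² + ⋯ + z_{p+q}²) on Fin (p+q) → ℂ with embedding ι. Let t ∈ ℝ^p and s ∈ ℝ^q be unit vectors, regarded as complex vectors t̃, s̃ ∈ Fin (p+q) → ℂ supported in the first p and last q coordinates respectively. Then the function g(x,y) = e^{⟨x,t⟩} (cos⟨y,s⟩ + i sin⟨y,s⟩) • (ι(t̃) + i • ι(s̃)) is monogenic on ℝ^{p+q}: Σ_{j=1}^{p+q} ι(e_j) * (∂_{x_j} g)(a) = 0 for every a. -/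
open MeasureTheory Metric
open scoped RealInnerProductSpace

noncomputable section

/-- The Dirac derivative of the complex-Clifford-algebra valued function `f` at `a` equals `D`:
the (real) partial derivatives of `f` at `a` in the standard coordinate directions exist and
`∑ⱼ ι(eⱼ) * ∂ⱼf(a) = D`. -/
def DiracDerivEqC {m : ℕ} {Q : QuadraticForm ℂ (Fin m → ℂ)}
    (f : EuclideanSpace ℝ (Fin m) → CliffordAlgebra Q)
    (a : EuclideanSpace ℝ (Fin m)) (D : CliffordAlgebra Q) : Prop :=
  ∃ d : Fin m → CliffordAlgebra Q,
    (∀ j, HasPDeriv f a (EuclideanSpace.single j 1) (d j)) ∧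
    ∑ j, CliffordAlgebra.ι Q (Pi.single j (1 : ℂ)) * d j = D

variable (p q : ℕ) in
/-- A real vector of `ℝ^p` regarded as a complex vector of `ℂ^{p+q}` supported in the
first `p` coordinates. -/
def embXC (x : EuclideanSpace ℝ (Fin p)) : Fin (p + q) → ℂ :=
  Fin.addCases (fun i => (x i : ℂ)) fun _ => 0

variable (p q : ℕ) in
/-- A real vector of `ℝ^q` regarded as a complex vector of `ℂ^{p+q}` supported in the
last `q` coordinates. -/
def embYC (y : EuclideanSpace ℝ (Fin q)) : Fin (p + q) → ℂ :=
  Fin.addCases (fun _ => 0) fun i => (y i : ℂ)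

/-! g = exp(⟨z, w⟩) • ι(w) with w = t̃ + i s̃, so ∂ⱼg = wⱼ g and the Dirac derivative is
exp(⟨z, w⟩) • ι(w)², which vanishes because Q(w) = ‖s‖² - ‖t‖² = 0: w is a null vector. -/

theorem hasPDeriv_comp_of_hasFDerivAt {E F A : Type*} [NormedAddCommGroup E] [NormedSpace ℝ E]
    [NormedAddCommGroup F] [NormedSpace ℝ F] [FiniteDimensional ℝ F]
    [AddCommGroup A] [Module ℝ A] {φ : E → F} {φ' : E →L[ℝ] F} {a : E}
    (hφ : HasFDerivAt φ φ' a) (T : F →ₗ[ℝ] A) (v : E) :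
    HasPDeriv (fun z => T (φ z)) a v (T (φ' v)) := by
  intro ℓ
  have hline : HasDerivAt (fun r : ℝ => a + r • v) v 0 := by
    simpa using ((hasDerivAt_id (0 : ℝ)).smul_const v).const_add a
  have hφline := hφ.comp_hasDerivAt_of_eq 0 hline (by simp)
  exact (LinearMap.toContinuousLinearMap (ℓ ∘ₗ T)).hasFDerivAt.comp_hasDerivAt 0 hφline

def complexPairing {m : ℕ} (w : Fin m → ℂ) : EuclideanSpace ℝ (Fin m) →L[ℝ] ℂ :=
  ∑ j, (EuclideanSpace.proj j : EuclideanSpace ℝ (Fin m) →L[ℝ] ℝ).smulRight (w j)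

theorem complexPairing_apply {m : ℕ} (w : Fin m → ℂ) (z : EuclideanSpace ℝ (Fin m)) :
    complexPairing w z = ∑ j, (z j : ℂ) * w j := by
  simp [complexPairing, Complex.real_smul]

theorem complexPairing_single {m : ℕ} (w : Fin m → ℂ) (j : Fin m) :
    complexPairing w (EuclideanSpace.single j 1) = w j := by
  simp [complexPairing_apply, apply_ite, ite_mul]

theorem sum_ι_single_mul_smul {m : ℕ} {Q : QuadraticForm ℂ (Fin m → ℂ)}
    (w : Fin m → ℂ) (c : ℂ) (u : CliffordAlgebra Q) :
    ∑ j, CliffordAlgebra.ι Q (Pi.single j 1) * ((c * w j) • u) =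
      c • (CliffordAlgebra.ι Q w * u) := by
  have hterm : ∀ j, CliffordAlgebra.ι Q (Pi.single j 1) * ((c * w j) • u) =
      c • (CliffordAlgebra.ι Q (Pi.single j (w j)) * u) := by
    intro j
    rw [mul_smul_comm, mul_smul, ← smul_mul_assoc, ← map_smul, ← Pi.single_smul, smul_eq_mul,
      mul_one]
  simp only [hterm, ← Finset.smul_sum, ← Finset.sum_mul, ← map_sum, Finset.univ_sum_single]

theorem diracDerivEqC_cexp_complexPairing_smul {m : ℕ} {Q : QuadraticForm ℂ (Fin m → ℂ)}
    (w : Fin m → ℂ) (u : CliffordAlgebra Q) (a : EuclideanSpace ℝ (Fin m)) :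
    DiracDerivEqC (fun z => Complex.exp (complexPairing w z) • u) a
      (Complex.exp (complexPairing w a) • (CliffordAlgebra.ι Q w * u)) := by
  refine ⟨fun j => (Complex.exp (complexPairing w a) * w j) • u, fun j => ?_,
    sum_ι_single_mul_smul w _ u⟩
  have := hasPDeriv_comp_of_hasFDerivAt ((complexPairing w).hasFDerivAt (x := a)).cexp
    ((LinearMap.toSpanSingleton ℂ _ u).restrictScalars ℝ) (EuclideanSpace.single j 1)
  simpa [complexPairing_single] using this

theorem sum_sq_embXC_add_I_smul_embYC (p q : ℕ) (t : EuclideanSpace ℝ (Fin p))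
    (s : EuclideanSpace ℝ (Fin q)) :
    ∑ i, (embXC p q t + Complex.I • embYC p q s) i ^ 2 = ‖t‖ ^ 2 - ‖s‖ ^ 2 := by
  rw [← Complex.ofReal_pow, ← Complex.ofReal_pow, EuclideanSpace.norm_sq_eq,
    EuclideanSpace.norm_sq_eq]
  simp [Fin.sum_univ_add, embXC, embYC, mul_pow, sub_eq_add_neg]

theorem inner_xpart_add_inner_ypart_mul_I (p q : ℕ) (t : EuclideanSpace ℝ (Fin p))
    (s : EuclideanSpace ℝ (Fin q)) (z : EuclideanSpace ℝ (Fin (p + q))) :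
    (⟪xpart p q z, t⟫ : ℂ) + ⟪ypart p q z, s⟫ * Complex.I =
      complexPairing (embXC p q t + Complex.I • embYC p q s) z := by
  simp [complexPairing_apply, Fin.sum_univ_add, xpart, ypart, embXC, embYC, PiLp.inner_apply,
    mul_comm]
  simp only [Finset.mul_sum, mul_assoc]

theorem stmt14_general (p q : ℕ)
    (Q : QuadraticForm ℂ (Fin (p + q) → ℂ))
    (hQ : ∀ z, Q z = -∑ i, z i ^ 2)
    (t : EuclideanSpace ℝ (Fin p)) (ht : ‖t‖ = 1)
    (s : EuclideanSpace ℝ (Fin q)) (hs : ‖s‖ = 1) :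
    ∀ a, DiracDerivEqC (fun z =>
      ((Real.exp ⟪xpart p q z, t⟫ : ℂ) *
          ((Real.cos ⟪ypart p q z, s⟫ : ℂ) +
            Complex.I * (Real.sin ⟪ypart p q z, s⟫ : ℂ))) •
        (CliffordAlgebra.ι Q (embXC p q t) +
          Complex.I • CliffordAlgebra.ι Q (embYC p q s))) a 0 := by
  intro a
  set w := embXC p q t + Complex.I • embYC p q s
  have hexp : ∀ z, (Real.exp ⟪xpart p q z, t⟫ : ℂ) *
      ((Real.cos ⟪ypart p q z, s⟫ : ℂ) + Complex.I * (Real.sin ⟪ypart p q z, s⟫ : ℂ)) =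
        Complex.exp (complexPairing w z) := by
    intro z
    rw [← inner_xpart_add_inner_ypart_mul_I, Complex.exp_add, Complex.exp_mul_I,
      Complex.ofReal_exp, Complex.ofReal_cos, Complex.ofReal_sin]
    ring
  have hnull : Q w = 0 := by
    rw [hQ, sum_sq_embXC_add_I_smul_embYC, ht, hs]
    norm_num
  have hu : CliffordAlgebra.ι Q (embXC p q t) + Complex.I • CliffordAlgebra.ι Q (embYC p q s) =
      CliffordAlgebra.ι Q w := by
    rw [map_add, map_smul]
  simp_rw [hexp, hu]
  convert diracDerivEqC_cexp_complexPairing_smul w (CliffordAlgebra.ι Q w) a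
  rw [CliffordAlgebra.ι_sq_scalar, hnull, map_zero, smul_zero]

theorem stmt14 (p q : ℕ) (hp : 1 ≤ p) (hq : 1 ≤ q)
    (Q : QuadraticForm ℂ (Fin (p + q) → ℂ))
    (hQ : ∀ z, Q z = -∑ i, z i ^ 2)
    (t : EuclideanSpace ℝ (Fin p)) (ht : ‖t‖ = 1)
    (s : EuclideanSpace ℝ (Fin q)) (hs : ‖s‖ = 1) :
    ∀ a, DiracDerivEqC (fun z =>
      ((Real.exp ⟪xpart p q z, t⟫ : ℂ) *
          ((Real.cos ⟪ypart p q z, s⟫ : ℂ) +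
            Complex.I * (Real.sin ⟪ypart p q z, s⟫ : ℂ))) •
        (CliffordAlgebra.ι Q (embXC p q t) +
          Complex.I • CliffordAlgebra.ι Q (embYC p q s))) a 0 :=
  stmt14_general p q Q hQ t ht s hs
end
end
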